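/- Invisibility of the two-copy planar body in the direction (0,−1), per-particle form: let α > 0, 0 < γ < β with 2αβ > 1, set h = 2(αβ² − 1/(4α)), and let D = B₂(α,β,γ) ∪ (B₂(α,β,γ) − (0,h)) be the union of the body with its translate by (0,−h). Let x₀ satisfy max(γ, 1/(2α)) ≤ |x₀| < β, put y₀ = αx₀² − 1/(4α), p = (x₀, y₀), q₁ = (−x₀, y₀ − h), q₂ = (x₀, −y₀ − h). Then: (i) no point (x₀, y) with y > y₀ lies in D, and p ∈ D; (ii) the billiard reflection of (0,−1) at p with unit normal (−2αx₀,1)/√(1+4α²x₀²) equals −p/‖p‖; (iii) the open segment {s·p : s ∈ (−1,1)} is disjoint from D, and −p ∈ D; (iv) the billiard reflection of −p/‖p‖ at −p with unit normal (2αx₀,−1)/√(1+4α²x₀²) equals (0,−1); (v) the open vertical segment {(−x₀, y) : y₀ − h < y < −y₀} is disjoint from D, and q₁ ∈ D; (vi) the billiard reflection of (0,−1) at q₁ with unit normal (2αx₀,1)/√(1+4α²x₀²) equals (x₀, −y₀)/‖p‖; (vii) the open segment from q₁ to q₂ (which passes through the shifted focus (0,−h)) is disjoint from D, and q₂ ∈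 D; (viii) the billiard reflection of (x₀,−y₀)/‖p‖ at q₂ with unit normal (−2αx₀,−1)/√(1+4α²x₀²) equals (0,−1); (ix) no point (x₀, y) with y < −y₀ − h lies in D. Consequently, the particle enters along the vertical line x = x₀ with velocity (0,−1), makes exactly four reflections, and exits along the same vertical line x = x₀ with velocity (0,−1); i.e., D is invisible to this particle. -/

import Mathlib

/-!
The upper boundary `y = αx² − 1/(4α)` of `B₂` is a parabola with focus `0` and the lower one is
its mirror image, so `B₂ − (0,h)` has the same picture with focus `(0,−h)`. By the focal property
of the parabola (`reflection_parabola_normal`) the vertical ray hitting `p` is sent through `0` to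
`−p`, and the one hitting `q₁` through `(0,−h)` to `q₂`; the reflections at `−p` and `q₂` undo
these, because their normals are the opposite ones and a reflection is an involution. The free
flights avoid `D` because chords through a focus lie inside the parabola and because the gap
`h − 2y₀ = 2(αβ² − αx₀²)` between the two copies is positive.
-/

open scoped RealInnerProductSpace

/-- The planar body `B₂(α,β,γ) = {(x,y) : |y| ≤ αx² − 1/(4α), γ ≤ |x| ≤ β}`. -/
def B2 (α β γ : ℝ) : Set (EuclideanSpace ℝ (Fin 2)) :=
  {p | |p 1| ≤ α * (p 0) ^ 2 - 1 / (4 * α) ∧ γ ≤ |p 0| ∧ |p 0| ≤ β}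

section Reflection

variable {E : Type*} [NormedAddCommGroup E] [InnerProductSpace ℝ E]

theorem reflection_orthogonal_singleton_apply (w v : E) :
    (ℝ ∙ w)ᗮ.reflection v = v - (2 * (⟪v, w⟫ / ‖w‖ ^ 2)) • w := by
  rw [Submodule.reflection_orthogonal_apply, Submodule.reflection_singleton_apply,
    real_inner_comm, neg_sub, ← smul_assoc, nsmul_eq_mul]
  norm_num

theorem sub_two_inner_smul_eq_reflection {w : E} {N : ℝ} (hw : ‖w‖ ^ 2 = N) (v : E) :
    v - (2 * ⟪v, (√N)⁻¹ • w⟫) • ((√N)⁻¹ • w) = (ℝ ∙ w)ᗮ.reflection v := by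
  subst hw
  rw [Real.sqrt_sq (norm_nonneg w), reflection_orthogonal_singleton_apply,
    real_inner_smul_right, smul_smul]
  ring_nf

theorem reflection_orthogonal_singleton_neg (w v : E) :
    (ℝ ∙ -w)ᗮ.reflection v = (ℝ ∙ w)ᗮ.reflection v := by
  simp [reflection_orthogonal_singleton_apply, neg_div, sub_eq_add_neg]

end Reflection

theorem norm_sq_vec2 (a b : ℝ) : ‖!₂[a, b]‖ ^ 2 = a ^ 2 + b ^ 2 := by
  simp [EuclideanSpace.norm_eq, Fin.sum_univ_two, Real.sq_sqrt (by positivity : 0 ≤ a ^ 2 + b ^ 2)]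

theorem neg_vec2 (a b : ℝ) : -!₂[a, b] = !₂[-a, -b] := by
  rw [← WithLp.toLp_neg]; simp

section Parabola

variable {α : ℝ}

theorem norm_vec2_parabola (hα : 0 < α) (x : ℝ) :
    ‖!₂[x, α * x ^ 2 - 1 / (4 * α)]‖ = α * x ^ 2 + 1 / (4 * α) := by
  rw [← sq_eq_sq₀ (norm_nonneg _) (by positivity), norm_sq_vec2]
  field_simp
  ring

theorem reflection_parabola_normal (hα : 0 < α) (x : ℝ) :
    (ℝ ∙ !₂[-(2 * α * x), 1])ᗮ.reflection !₂[0, -1] =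
      (α * x ^ 2 + 1 / (4 * α))⁻¹ • !₂[-x, -(α * x ^ 2 - 1 / (4 * α))] := by
  rw [reflection_orthogonal_singleton_apply, norm_sq_vec2]
  ext i
  fin_cases i <;> simp [PiLp.inner_apply, Fin.sum_univ_two] <;> field_simp <;> ring

theorem parabola_nonneg (hα : 0 < α) {x : ℝ} (hx : 1 / (2 * α) ≤ |x|) :
    0 ≤ α * x ^ 2 - 1 / (4 * α) := by
  have h2 : 1 ≤ 2 * α * |x| := by rwa [div_le_iff₀' (by positivity)] at hx
  rw [sub_nonneg, div_le_iff₀ (by positivity), ← sq_abs]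
  nlinarith

theorem parabola_lt_parabola (hα : 0 < α) {x b : ℝ} (hx : |x| < b) :
    α * x ^ 2 - 1 / (4 * α) < α * b ^ 2 - 1 / (4 * α) := by
  have : x ^ 2 < b ^ 2 := by
    rw [← sq_abs]; exact pow_lt_pow_left₀ hx (abs_nonneg x) two_ne_zero
  gcongr

/-- Chords through the focus `0` lie inside the parabola. -/
theorem parabola_smul_lt (hα : 0 < α) {s : ℝ} (hs : |s| < 1) (x : ℝ) :
    α * (s * x) ^ 2 - 1 / (4 * α) < |s| * (α * x ^ 2 - 1 / (4 * α)) := by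
  have : 0 < (1 - |s|) * (|s| * α * x ^ 2 + 1 / (4 * α)) := by
    have := abs_nonneg s
    apply mul_pos <;> [linarith; positivity]
  rw [mul_pow, ← sq_abs s]
  linarith

theorem parabola_smul_le (hα : 0 ≤ α) {s : ℝ} (hs : |s| ≤ 1) (x : ℝ) :
    α * (s * x) ^ 2 - 1 / (4 * α) ≤ α * x ^ 2 - 1 / (4 * α) := by
  have : s ^ 2 ≤ 1 := by rw [← sq_abs]; nlinarith [abs_nonneg s]
  rw [mul_pow]
  gcongr
  nlinarith [sq_nonneg x]

end Parabola

def twoCopyBody (α β γ h : ℝ) : Set (EuclideanSpace ℝ (Fin 2)) :=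
  B2 α β γ ∪ (fun q => q - !₂[0, h]) '' B2 α β γ

section TwoCopyBody

variable {α β γ h : ℝ}

theorem vec2_mem_twoCopyBody_iff {x y : ℝ} :
    !₂[x, y] ∈ twoCopyBody α β γ h ↔
      (|y| ≤ α * x ^ 2 - 1 / (4 * α) ∨ |y + h| ≤ α * x ^ 2 - 1 / (4 * α)) ∧
        γ ≤ |x| ∧ |x| ≤ β := by
  simp [twoCopyBody, B2, sub_eq_iff_eq_add, or_and_right]

theorem vec2_notMem_twoCopyBody {x y : ℝ} (hy : α * x ^ 2 - 1 / (4 * α) < |y|)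
    (hyh : α * x ^ 2 - 1 / (4 * α) < |y + h|) : !₂[x, y] ∉ twoCopyBody α β γ h := by
  rw [vec2_mem_twoCopyBody_iff]
  rintro ⟨hy' | hy', -⟩ <;> linarith

theorem vec2_notMem_twoCopyBody_of_above {x y : ℝ} (hh : 0 ≤ h)
    (hy : α * x ^ 2 - 1 / (4 * α) < y) : !₂[x, y] ∉ twoCopyBody α β γ h :=
  vec2_notMem_twoCopyBody (by linarith [le_abs_self y]) (by linarith [le_abs_self (y + h)])

theorem vec2_notMem_twoCopyBody_of_below {x y : ℝ} (hh : 0 ≤ h)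
    (hy : y < -(α * x ^ 2 - 1 / (4 * α)) - h) : !₂[x, y] ∉ twoCopyBody α β γ h :=
  vec2_notMem_twoCopyBody (by linarith [neg_abs_le y]) (by linarith [neg_abs_le (y + h)])

theorem vec2_notMem_twoCopyBody_of_between {x y : ℝ}
    (hy₁ : α * x ^ 2 - 1 / (4 * α) - h < y) (hy₂ : y < -(α * x ^ 2 - 1 / (4 * α))) :
    !₂[x, y] ∉ twoCopyBody α β γ h :=
  vec2_notMem_twoCopyBody (by linarith [neg_abs_le y]) (by linarith [le_abs_self (y + h)])

variable {x₀ y₀ : ℝ}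

theorem smul_vec2_notMem_twoCopyBody (hα : 0 < α) (hy₀ : y₀ = α * x₀ ^ 2 - 1 / (4 * α))
    (hy₀_nonneg : 0 ≤ y₀) (hh : 2 * y₀ < h) {s : ℝ} (hs : s ∈ Set.Ioo (-1 : ℝ) 1) :
    s • !₂[x₀, y₀] ∉ twoCopyBody α β γ h := by
  have hs' : |s| < 1 := abs_lt.2 hs
  have hsy : |s * y₀| = |s| * y₀ := by rw [abs_mul, abs_of_nonneg hy₀_nonneg]
  rw [← WithLp.toLp_smul, Matrix.smul_vec2, smul_eq_mul, smul_eq_mul]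
  refine vec2_notMem_twoCopyBody ?_ ?_
  · rw [hsy, hy₀]; exact parabola_smul_lt hα hs' x₀
  · have := parabola_smul_le hα.le hs'.le x₀
    have : |s| * y₀ ≤ y₀ := mul_le_of_le_one_left hy₀_nonneg hs'.le
    linarith [neg_abs_le (s * y₀), le_abs_self (s * y₀ + h)]

theorem openSegment_notMem_twoCopyBody (hα : 0 < α) (hy₀ : y₀ = α * x₀ ^ 2 - 1 / (4 * α))
    (hy₀_nonneg : 0 ≤ y₀) (hh : 2 * y₀ < h) :
    ∀ q ∈ openSegment ℝ !₂[-x₀, y₀ - h] !₂[x₀, -y₀ - h], q ∉ twoCopyBody α β γ h := by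
  rintro _ ⟨a, b, ha, hb, hab, rfl⟩
  have hs : |b - a| < 1 := abs_lt.2 ⟨by linarith, by linarith⟩
  have hsy : |(b - a) * y₀| = |b - a| * y₀ := by rw [abs_mul, abs_of_nonneg hy₀_nonneg]
  have hq : a • !₂[-x₀, y₀ - h] + b • !₂[x₀, -y₀ - h] =
      (!₂[(b - a) * x₀, -((b - a) * y₀) - h] : EuclideanSpace ℝ (Fin 2)) := by
    ext i; fin_cases i
    · simp; ring
    · simp; linear_combination (-h) * hab
  rw [hq]
  refine vec2_notMem_twoCopyBody ?_ ?_
  · have := parabola_smul_le hα.le hs.le x₀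
    have : |b - a| * y₀ ≤ y₀ := mul_le_of_le_one_left hy₀_nonneg hs.le
    linarith [neg_le_abs (-((b - a) * y₀) - h), neg_abs_le ((b - a) * y₀)]
  · rw [sub_add_cancel, abs_neg, hsy, hy₀]
    exact parabola_smul_lt hα hs x₀

theorem bounce_points_mem_twoCopyBody (hy₀ : y₀ = α * x₀ ^ 2 - 1 / (4 * α)) (hy₀_nonneg : 0 ≤ y₀)
    (hγ : γ ≤ |x₀|) (hβ : |x₀| ≤ β) :
    !₂[x₀, y₀] ∈ twoCopyBody α β γ h ∧ !₂[-x₀, -y₀] ∈ twoCopyBody α β γ h ∧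
      !₂[-x₀, y₀ - h] ∈ twoCopyBody α β γ h ∧ !₂[x₀, -y₀ - h] ∈ twoCopyBody α β γ h := by
  simp only [vec2_mem_twoCopyBody_iff, abs_neg, neg_sq, sub_add_cancel, abs_of_nonneg hy₀_nonneg, ← hy₀]
  simp [hγ, hβ]

end TwoCopyBody

theorem planar_invisibility_two_copies_general (α β γ x₀ : ℝ) (hα : 0 < α)
    (hx₀l : max γ (1 / (2 * α)) ≤ |x₀|) (hx₀r : |x₀| < β)
    (h y₀ : ℝ) (hh : h = 2 * (α * β ^ 2 - 1 / (4 * α)))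
    (hy₀ : y₀ = α * x₀ ^ 2 - 1 / (4 * α))
    (e₂ : EuclideanSpace ℝ (Fin 2)) (he₂ : e₂ = !₂[0, h])
    (D : Set (EuclideanSpace ℝ (Fin 2)))
    (hD : D = B2 α β γ ∪ ((fun q => q - e₂) '' B2 α β γ))
    (p q₁ q₂ v u n₁ n₂ n₃ n₄ : EuclideanSpace ℝ (Fin 2))
    (hp : p = !₂[x₀, y₀]) (hv : v = !₂[0, -1])
    (hu : u = ‖p‖⁻¹ • (!₂[x₀, -y₀] : EuclideanSpace ℝ (Fin 2))) (hq₁ : q₁ = !₂[-x₀, y₀ - h]) (hq₂ : q₂ = !₂[x₀, -y₀ - h])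
    (hn₁ : n₁ = (Real.sqrt (1 + 4 * α ^ 2 * x₀ ^ 2))⁻¹ •
      (!₂[-(2 * α * x₀), 1] : EuclideanSpace ℝ (Fin 2)))
    (hn₂ : n₂ = (Real.sqrt (1 + 4 * α ^ 2 * x₀ ^ 2))⁻¹ •
      (!₂[2 * α * x₀, -1] : EuclideanSpace ℝ (Fin 2)))
    (hn₃ : n₃ = (Real.sqrt (1 + 4 * α ^ 2 * x₀ ^ 2))⁻¹ •
      (!₂[2 * α * x₀, 1] : EuclideanSpace ℝ (Fin 2)))
    (hn₄ : n₄ = (Real.sqrt (1 + 4 * α ^ 2 * x₀ ^ 2))⁻¹ •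
      (!₂[-(2 * α * x₀), -1] : EuclideanSpace ℝ (Fin 2))) :
    -- (i) incoming vertical ray misses `D`; first hit is at `p`
    ((∀ y : ℝ, y > y₀ → (!₂[x₀, y] : EuclideanSpace ℝ (Fin 2)) ∉ D) ∧ p ∈ D) ∧
    -- (ii) reflection at `p` sends `(0,−1)` to `−p/‖p‖`
    v - (2 * ⟪v, n₁⟫) • n₁ = -(‖p‖⁻¹ • p) ∧
    -- (iii) the chord through the focus misses `D`; `−p ∈ D`
    ((∀ s ∈ Set.Ioo (-1 : ℝ) 1, s • p ∉ D) ∧ -p ∈ D) ∧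
    -- (iv) reflection at `−p` sends `−p/‖p‖` to `(0,−1)`
    (-(‖p‖⁻¹ • p)) - (2 * ⟪-(‖p‖⁻¹ • p), n₂⟫) • n₂ = v ∧
    -- (v) the open vertical segment from `−p` down to `q₁` misses `D`; `q₁ ∈ D`
    ((∀ y : ℝ, y₀ - h < y → y < -y₀ → (!₂[-x₀, y] : EuclideanSpace ℝ (Fin 2)) ∉ D) ∧
      q₁ ∈ D) ∧
    -- (vi) reflection at `q₁` sends `(0,−1)` to `(x₀, −y₀)/‖p‖`
    v - (2 * ⟪v, n₃⟫) • n₃ = u ∧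
    -- (vii) the open segment from `q₁` to `q₂` misses `D`; `q₂ ∈ D`
    ((∀ q ∈ openSegment ℝ q₁ q₂, q ∉ D) ∧ q₂ ∈ D) ∧
    -- (viii) reflection at `q₂` sends `(x₀,−y₀)/‖p‖` to `(0,−1)`
    u - (2 * ⟪u, n₄⟫) • n₄ = v ∧
    -- (ix) the outgoing vertical ray along `x = x₀` misses `D`
    (∀ y : ℝ, y < -y₀ - h → (!₂[x₀, y] : EuclideanSpace ℝ (Fin 2)) ∉ D) := by
  obtain ⟨hγx, hx₀⟩ := max_le_iff.1 hx₀l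
  have hy₀_nonneg : 0 ≤ y₀ := hy₀ ▸ parabola_nonneg hα hx₀
  have hyh : 2 * y₀ < h := by rw [hh, hy₀]; linarith [parabola_lt_parabola hα hx₀r]
  have hh₀ : 0 ≤ h := by linarith
  have hnp : ‖p‖ = α * x₀ ^ 2 + 1 / (4 * α) := by rw [hp, hy₀, norm_vec2_parabola hα]
  have hrefl₁ : (ℝ ∙ !₂[-(2 * α * x₀), 1])ᗮ.reflection v = -(‖p‖⁻¹ • p) := by
    rw [hv, reflection_parabola_normal hα, hnp, hp, hy₀, ← smul_neg, neg_vec2]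
  have hrefl₃ : (ℝ ∙ !₂[2 * α * x₀, 1])ᗮ.reflection v = u := by
    rw [hv, hu, hnp, hy₀]; simpa using reflection_parabola_normal hα (-x₀)
  obtain ⟨hp_mem, hnegp_mem, hq₁_mem, hq₂_mem⟩ :=
    bounce_points_mem_twoCopyBody (h := h) hy₀ hy₀_nonneg hγx hx₀r.le
  have hD' : D = twoCopyBody α β γ h := by rw [hD, he₂]; rfl
  subst hD' hp hq₁ hq₂ hn₁ hn₂ hn₃ hn₄
  refine ⟨⟨fun y hy => vec2_notMem_twoCopyBody_of_above hh₀ (by rwa [← hy₀]), hp_mem⟩, ?_,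
    ⟨fun s hs => smul_vec2_notMem_twoCopyBody hα hy₀ hy₀_nonneg hyh hs, by rwa [neg_vec2]⟩, ?_,
    ⟨fun y hy₁ hy₂ => vec2_notMem_twoCopyBody_of_between (by rwa [neg_sq, ← hy₀])
      (by rwa [neg_sq, ← hy₀]), hq₁_mem⟩, ?_,
    ⟨openSegment_notMem_twoCopyBody hα hy₀ hy₀_nonneg hyh, hq₂_mem⟩, ?_,
    fun y hy => vec2_notMem_twoCopyBody_of_below hh₀ (by rwa [← hy₀])⟩
  · rw [sub_two_inner_smul_eq_reflection (by rw [norm_sq_vec2]; ring), hrefl₁]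
  · rw [sub_two_inner_smul_eq_reflection (by rw [norm_sq_vec2]; ring),
      show !₂[2 * α * x₀, -1] = -!₂[-(2 * α * x₀), 1] by rw [neg_vec2, neg_neg],
      reflection_orthogonal_singleton_neg, ← hrefl₁,
      Submodule.reflection_reflection]
  · rw [sub_two_inner_smul_eq_reflection (by rw [norm_sq_vec2]; ring), hrefl₃]
  · rw [sub_two_inner_smul_eq_reflection (by rw [norm_sq_vec2]; ring),
      show !₂[-(2 * α * x₀), -1] = -!₂[2 * α * x₀, 1] by rw [neg_vec2],
      reflection_orthogonal_singleton_neg,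
      ← hrefl₃, Submodule.reflection_reflection]

/-- Invisibility of the two-copy planar body in the direction `(0,−1)`, per-particle
form: the particle enters along the vertical line `x = x₀`, makes exactly four
reflections (at `p`, `−p`, `q₁`, `q₂`), and exits along the same vertical line with
the same velocity `(0,−1)`. -/
theorem planar_invisibility_two_copies (α β γ x₀ : ℝ) (hα : 0 < α) (hγ : 0 < γ)
    (hγβ : γ < β) (hβ : 2 * α * β > 1)
    (hx₀l : max γ (1 / (2 * α)) ≤ |x₀|) (hx₀r : |x₀| < β)
    (h y₀ : ℝ) (hh : h = 2 * (α * β ^ 2 - 1 / (4 * α)))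
    (hy₀ : y₀ = α * x₀ ^ 2 - 1 / (4 * α))
    (e₂ : EuclideanSpace ℝ (Fin 2)) (he₂ : e₂ = !₂[0, h])
    (D : Set (EuclideanSpace ℝ (Fin 2)))
    (hD : D = B2 α β γ ∪ ((fun q => q - e₂) '' B2 α β γ))
    (p q₁ q₂ v u n₁ n₂ n₃ n₄ : EuclideanSpace ℝ (Fin 2))
    (hp : p = !₂[x₀, y₀]) (hv : v = !₂[0, -1])
    (hu : u = ‖p‖⁻¹ • (!₂[x₀, -y₀] : EuclideanSpace ℝ (Fin 2))) (hq₁ : q₁ = !₂[-x₀, y₀ - h]) (hq₂ : q₂ = !₂[x₀, -y₀ - h])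
    (hn₁ : n₁ = (Real.sqrt (1 + 4 * α ^ 2 * x₀ ^ 2))⁻¹ •
      (!₂[-(2 * α * x₀), 1] : EuclideanSpace ℝ (Fin 2)))
    (hn₂ : n₂ = (Real.sqrt (1 + 4 * α ^ 2 * x₀ ^ 2))⁻¹ •
      (!₂[2 * α * x₀, -1] : EuclideanSpace ℝ (Fin 2)))
    (hn₃ : n₃ = (Real.sqrt (1 + 4 * α ^ 2 * x₀ ^ 2))⁻¹ •
      (!₂[2 * α * x₀, 1] : EuclideanSpace ℝ (Fin 2)))
    (hn₄ : n₄ = (Real.sqrt (1 + 4 * α ^ 2 * x₀ ^ 2))⁻¹ •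
      (!₂[-(2 * α * x₀), -1] : EuclideanSpace ℝ (Fin 2))) :
    -- (i) incoming vertical ray misses `D`; first hit is at `p`
    ((∀ y : ℝ, y > y₀ → (!₂[x₀, y] : EuclideanSpace ℝ (Fin 2)) ∉ D) ∧ p ∈ D) ∧
    -- (ii) reflection at `p` sends `(0,−1)` to `−p/‖p‖`
    v - (2 * ⟪v, n₁⟫) • n₁ = -(‖p‖⁻¹ • p) ∧
    -- (iii) the chord through the focus misses `D`; `−p ∈ D`
    ((∀ s ∈ Set.Ioo (-1 : ℝ) 1, s • p ∉ D) ∧ -p ∈ D) ∧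
    -- (iv) reflection at `−p` sends `−p/‖p‖` to `(0,−1)`
    (-(‖p‖⁻¹ • p)) - (2 * ⟪-(‖p‖⁻¹ • p), n₂⟫) • n₂ = v ∧
    -- (v) the open vertical segment from `−p` down to `q₁` misses `D`; `q₁ ∈ D`
    ((∀ y : ℝ, y₀ - h < y → y < -y₀ → (!₂[-x₀, y] : EuclideanSpace ℝ (Fin 2)) ∉ D) ∧
      q₁ ∈ D) ∧
    -- (vi) reflection at `q₁` sends `(0,−1)` to `(x₀, −y₀)/‖p‖`
    v - (2 * ⟪v, n₃⟫) • n₃ = u ∧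
    -- (vii) the open segment from `q₁` to `q₂` misses `D`; `q₂ ∈ D`
    ((∀ q ∈ openSegment ℝ q₁ q₂, q ∉ D) ∧ q₂ ∈ D) ∧
    -- (viii) reflection at `q₂` sends `(x₀,−y₀)/‖p‖` to `(0,−1)`
    u - (2 * ⟪u, n₄⟫) • n₄ = v ∧
    -- (ix) the outgoing vertical ray along `x = x₀` misses `D`
    (∀ y : ℝ, y < -y₀ - h → (!₂[x₀, y] : EuclideanSpace ℝ (Fin 2)) ∉ D) :=
  planar_invisibility_two_copies_general α β γ x₀ hα hx₀l hx₀r h y₀ hh hy₀ e₂ he₂ D hD p q₁ q₂ v u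
    n₁ n₂ n₃ n₄ hp hv hu hq₁ hq₂ hn₁ hn₂ hn₃ hn₄
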